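/- arXiv:1309.4161 — 4 statements merged into one kernel-verified Lean document; each statement's English description precedes it below -/
import Mathlib

section
/- Suppose the underlying network G is a tree. Then for any node v ∈ V and any feasible elapsed time t ∈ 𝒯_v, there exists a most likely infection path X^t for (v,t) such that for every node u ∈ V for which the subtree T_u(v;G) is non-observable, node u is never infected in X^t, i.e., X(u,τ) ≠ infected for all τ ≤ t. -/
open scoped Classical

namespace SILimited

/-- The possible states of a node in the discrete-time SI model with limited observations:
susceptible, non-susceptible, infected (non-explicit), and explicit. -/
inductive NodeState : Type
  | susceptible : NodeState
  | nonsusceptible : NodeState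
  | infected : NodeState
  | explicitN : NodeState
  deriving DecidableEq

/-- A node state counts as infected if it is infected (non-explicit) or explicit. -/
def NodeState.IsInfected : NodeState → Prop
  | .infected => True
  | .explicitN => True
  | _ => False

variable {V : Type*}

/-- One-time-slot transition probability of a single node `u` with explicit probability `qu`,
infection probability `p`: a susceptible node stays susceptible w.p. `1 - p`, becomes infected
non-explicit w.p. `p * (1 - qu)`, becomes explicit w.p. `p * qu`; infected (resp. explicit)
nodes stay infected (resp. explicit), and non-susceptible nodes remain uninfected w.p. one. -/
def transProb (p qu : ℝ) : NodeState → NodeState → ℝ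
  | .susceptible, .susceptible => 1 - p
  | .susceptible, .infected => p * (1 - qu)
  | .susceptible, .explicitN => p * qu
  | .nonsusceptible, .nonsusceptible => 1
  | .nonsusceptible, .susceptible => 1
  | .infected, .infected => 1
  | .explicitN, .explicitN => 1
  | _, _ => 0

/-- Probability `P_v(X^t)` of an infection path `X` over elapsed time `t` given source `v`:
the product over nodes and time slots of the one-slot transition probabilities, together with
the factor for whether the source is explicit or not. -/
noncomputable def pathProb (p : ℝ) (q : V → ℝ) (v : V) (t : ℕ) (X : V → ℕ → NodeState) : ℝ :=
  (if X v 0 = .explicitN then q v else 1 - q v) *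
    ∏ᶠ u : V, ∏ τ ∈ Finset.range t, transProb p (q u) (X u τ) (X u (τ + 1))

/-- `X` is a valid infection path over times `0, 1, …, t` for the SI dynamics on `G`
with (single) infection source `v`. -/
structure IsInfectionPath (G : SimpleGraph V) (v : V) (t : ℕ) (X : V → ℕ → NodeState) : Prop where
  source_infected : (X v 0).IsInfected
  init_uninfected : ∀ u, u ≠ v → ¬ (X u 0).IsInfected
  susceptible_iff : ∀ u, ∀ τ ≤ t, ¬ (X u τ).IsInfected →
    (X u τ = .susceptible ↔ ∃ w, G.Adj u w ∧ (X w τ).IsInfected)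
  infected_stays : ∀ u, ∀ τ, τ < t → X u τ = .infected → X u (τ + 1) = .infected
  explicit_stays : ∀ u, ∀ τ, τ < t → X u τ = .explicitN → X u (τ + 1) = .explicitN
  infect_from_susceptible : ∀ u, ∀ τ, τ < t → (X u (τ + 1)).IsInfected →
    (X u τ).IsInfected ∨ X u τ = .susceptible

/-- An infection path `X^t` is consistent with the observed explicit set `Ve` if the nodes
explicit at time `t` are exactly those of `Ve`. -/
def ConsistentWith (Ve : Set V) (t : ℕ) (X : V → ℕ → NodeState) : Prop :=
  ∀ u, X u t = .explicitN ↔ u ∈ Ve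

/-- The set `𝒳_v` of infection paths with source `v` and elapsed time `t` consistent with `Ve`. -/
def pathsFor (G : SimpleGraph V) (Ve : Set V) (v : V) (t : ℕ) : Set (V → ℕ → NodeState) :=
  {X | IsInfectionPath G v t X ∧ ConsistentWith Ve t X}

/-- The set `𝒯_v` of feasible elapsed times for source `v`. -/
def feasibleTimes (G : SimpleGraph V) (Ve : Set V) (v : V) : Set ℕ :=
  {t | (pathsFor G Ve v t).Nonempty}

/-- `X` is a most likely infection path for `(v, t)`: it is a consistent infection path and
maximizes `P_v` over `𝒳_v` at elapsed time `t`. -/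
def IsMostLikely (G : SimpleGraph V) (p : ℝ) (q : V → ℝ) (Ve : Set V) (v : V) (t : ℕ)
    (X : V → ℕ → NodeState) : Prop :=
  X ∈ pathsFor G Ve v t ∧ ∀ Y ∈ pathsFor G Ve v t, pathProb p q v t Y ≤ pathProb p q v t X

/-- `d̄(v, A) = max_{u ∈ A} d(v, u)`. -/
noncomputable def dbar (G : SimpleGraph V) (v : V) (A : Set V) : ℕ :=
  sSup (G.dist v '' A)

/-- Vertex set of the subtree `T_u(v;G)` rooted at `u` with the first edge of the path from
`u` to `v` removed: in a tree these are the vertices `w` whose path from `v` passes through `u`. -/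
def subtreeAway (G : SimpleGraph V) (u v : V) : Set V :=
  {w | G.dist v w = G.dist v u + G.dist u w}

/-- Vertex set of the minimal connected subtree of the tree `G` spanning `S`: the vertices
lying on a path between two vertices of `S`. -/
def spanVerts (G : SimpleGraph V) (S : Set V) : Set V :=
  {w | ∃ a ∈ S, ∃ b ∈ S, G.dist a b = G.dist a w + G.dist w b}

/-- The first infection time of node `u` in the infection path `X`. -/
noncomputable def firstInfection (X : V → ℕ → NodeState) (u : V) : ℕ :=
  sInf {τ | (X u τ).IsInfected}

/-- The latest infection path for `(v, t)`: a consistent infection path in which every node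
outside the minimal connected subtree `H` spanning `Ve ∪ {v}` remains uninfected for all
`τ ≤ t`, and every `u ∈ H \ {v}` first becomes infected at time `t - d̄(u, T_u(v;H))`. -/
def IsLatestPath (G : SimpleGraph V) (Ve : Set V) (v : V) (t : ℕ)
    (X : V → ℕ → NodeState) : Prop :=
  IsInfectionPath G v t X ∧ ConsistentWith Ve t X ∧
  (∀ u, u ∉ spanVerts G (Ve ∪ {v}) → ∀ τ ≤ t, ¬ (X u τ).IsInfected) ∧
  (∀ u ∈ spanVerts G (Ve ∪ {v}), u ≠ v →
    firstInfection X u = t - dbar G u (subtreeAway G u v ∩ spanVerts G (Ve ∪ {v})))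

end SILimited

open SILimited

/-!
Among the most likely infection paths pick one, `X`, with the fewest ever-infected nodes, and
suppose that `X` infects, first at time `τ₀`, a node `u` whose subtree `T_u(v;G)` holds no
explicit node. Cancel that infection: `u` stays susceptible from `τ₀` on and the rest of the
subtree is never reached; consistency with `Ve` is kept. The slot `τ₀ - 1` of `u` turns from
`p (1 - q_u)` into `1 - p`, no smaller since `q_u ≥ 2 - 1/p`, and every later slot of `u` gets a
factor `1 - p`. In `X` each of these later slots already cost at least `1 - p` inside the subtree,
because a child of the infected node of the subtree farthest from `v` (all degrees are `≥ 2`) was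
susceptible. So the pruned path is again most likely, with fewer infected nodes.
-/

namespace SimpleGraph

variable {V : Type*} {G : SimpleGraph V}

theorem Connected.finite_setOf_dist_le (hG : G.Connected)
    (hloc : ∀ x, (G.neighborSet x).Finite) (v : V) (n : ℕ) : {w | G.dist v w ≤ n}.Finite := by
  induction n with
  | zero => simp [hG.dist_eq_zero_iff]
  | succ n ih =>
    refine (ih.biUnion fun x _ ↦ (hloc x).insert x).subset fun w hw ↦ ?_
    obtain rfl | hwv := eq_or_ne w v
    · exact Set.mem_biUnion (x := w) (by simp) (Set.mem_insert w _)
    obtain ⟨p, hp⟩ := hG.exists_walk_length_eq_dist w v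
    obtain ⟨x, hwx, q, rfl⟩ := p.exists_eq_cons_of_ne hwv
    have hq : G.dist v x ≤ n := by
      rw [dist_comm]
      have := G.dist_le q
      have hw : G.dist v w ≤ n + 1 := hw
      simp only [Walk.length_cons, dist_comm (u := w)] at hp
      omega
    exact Set.mem_biUnion hq (Set.mem_insert_of_mem x hwx.symm)

theorem IsTree.length_eq_dist (hT : G.IsTree) {a b : V} {p : G.Walk a b} (hp : p.IsPath) :
    p.length = G.dist a b := by
  obtain ⟨q, hq, hql⟩ := hT.connected.exists_path_of_dist a b
  rw [(hT.existsUnique_path a b).unique hp hq, hql]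

theorem IsTree.dist_eq_add_of_mem_support (hT : G.IsTree) {a b x : V} {p : G.Walk a b}
    (hp : p.IsPath) (hx : x ∈ p.support) : G.dist a b = G.dist a x + G.dist x b := by
  have h := congrArg Walk.length (p.take_spec hx)
  rw [Walk.length_append, hT.length_eq_dist hp, hT.length_eq_dist (hp.takeUntil hx),
    hT.length_eq_dist (hp.dropUntil hx)] at h
  exact h.symm

theorem IsTree.mem_support_of_dist_eq_add (hT : G.IsTree) {a b x : V}
    (h : G.dist a b = G.dist a x + G.dist x b) {p : G.Walk a b} (hp : p.IsPath) :
    x ∈ p.support := by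
  obtain ⟨p₁, -, hp₁⟩ := hT.connected.exists_path_of_dist a x
  obtain ⟨p₂, -, hp₂⟩ := hT.connected.exists_path_of_dist x b
  have hpath : (p₁.append p₂).IsPath :=
    Walk.isPath_of_length_eq_dist _ (by rw [Walk.length_append, hp₁, hp₂, h])
  rw [(hT.existsUnique_path a b).unique hp hpath, Walk.mem_support_append_iff]
  exact Or.inl p₁.end_mem_support

theorem IsTree.dist_eq_add_of_dist_eq_add_of_le (hT : G.IsTree) {a b x z : V}
    (hx : G.dist a b = G.dist a x + G.dist x b) (hz : G.dist a b = G.dist a z + G.dist z b)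
    (hle : G.dist a x ≤ G.dist a z) : G.dist a z = G.dist a x + G.dist x z := by
  obtain ⟨P, hP, -⟩ := hT.connected.exists_path_of_dist a b
  have hzP := hT.mem_support_of_dist_eq_add hz hP
  have hxP : x ∈ (P.takeUntil z hzP).support ∨ x ∈ (P.dropUntil z hzP).support := by
    rw [← Walk.mem_support_append_iff, P.take_spec hzP]
    exact hT.mem_support_of_dist_eq_add hx hP
  rcases hxP with hx' | hx'
  · exact hT.dist_eq_add_of_mem_support (hP.takeUntil hzP) hx'
  · have hzx := hT.dist_eq_add_of_mem_support (hP.dropUntil hzP) hx'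
    have : G.dist z x = 0 := by
      have := hT.connected.dist_triangle (u := a) (v := z) (w := x)
      omega
    rw [hT.connected.dist_eq_zero_iff.mp this]
    simp

theorem IsTree.exists_adj_dist_eq_add_one (hT : G.IsTree) (v : V) {d : V}
    (hd : (G.neighborSet d).Nontrivial) : ∃ c, G.Adj d c ∧ G.dist v c = G.dist v d + 1 := by
  by_contra! h
  have hparent : ∀ z ∈ G.neighborSet d, G.dist v d = G.dist v z + 1 := fun z hz ↦
    (hT.dist_eq_dist_add_one_of_adj v hz).resolve_right (h z hz)
  obtain ⟨z₁, hz₁, z₂, hz₂, hne⟩ := hd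
  have h₁ := hparent z₁ hz₁
  have h₂ := hparent z₂ hz₂
  have e₁ : G.dist z₁ d = 1 := dist_eq_one_iff_adj.mpr (G.adj_symm hz₁)
  have e₂ : G.dist z₂ d = 1 := dist_eq_one_iff_adj.mpr (G.adj_symm hz₂)
  have h₁₂ := hT.dist_eq_add_of_dist_eq_add_of_le (a := v) (b := d) (x := z₁) (z := z₂)
    (by omega) (by omega) (by omega)
  exact hne (hT.connected.dist_eq_zero_iff.mp (by omega))

end SimpleGraph

theorem Finset.prod_prod_le_pow_card {ι κ R : Type*} [CommSemiring R] [PartialOrder R]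
    [IsOrderedRing R] {E : Finset ι} {S T : Finset κ} {f : ι → κ → R} {r : R} (hTS : T ⊆ S)
    (h0 : ∀ i ∈ E, ∀ k ∈ S, 0 ≤ f i k) (h1 : ∀ i ∈ E, ∀ k ∈ S, f i k ≤ 1)
    (hr : ∀ k ∈ T, ∃ i ∈ E, f i k ≤ r) : ∏ i ∈ E, ∏ k ∈ S, f i k ≤ r ^ T.card := by
  rw [Finset.prod_comm, ← Finset.prod_const]
  calc ∏ k ∈ S, ∏ i ∈ E, f i k
      ≤ ∏ k ∈ T, ∏ i ∈ E, f i k :=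
        Finset.prod_le_prod_of_subset_of_le_one hTS
          (fun k hk ↦ Finset.prod_nonneg fun i hi ↦ h0 i hi k hk)
          (fun k hk _ ↦ Finset.prod_le_one (fun i hi ↦ h0 i hi k hk) (fun i hi ↦ h1 i hi k hk))
    _ ≤ ∏ _k ∈ T, r := by
        refine Finset.prod_le_prod (fun k hk ↦ Finset.prod_nonneg fun i hi ↦ h0 i hi k (hTS hk))
          fun k hk ↦ ?_
        obtain ⟨i, hi, hik⟩ := hr k hk
        calc ∏ j ∈ E, f j k ≤ ∏ j ∈ {i}, f j k :=
              Finset.prod_le_prod_of_subset_of_le_one (by simpa using hi)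
                (fun j hj ↦ h0 j hj k (hTS hk)) (fun j hj _ ↦ h1 j hj k (hTS hk))
          _ ≤ r := by simpa using hik

namespace SILimited

open SimpleGraph

instance : Fintype NodeState :=
  ⟨{.susceptible, .nonsusceptible, .infected, .explicitN}, fun x ↦ by cases x <;> simp⟩

@[simp]
theorem NodeState.isInfected_infected : NodeState.infected.IsInfected := trivial

@[simp]
theorem NodeState.isInfected_explicitN : NodeState.explicitN.IsInfected := trivial

@[simp]
theorem NodeState.not_isInfected_susceptible : ¬ NodeState.susceptible.IsInfected := id

@[simp]
theorem NodeState.not_isInfected_nonsusceptible : ¬ NodeState.nonsusceptible.IsInfected := id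

theorem NodeState.isInfected_iff (s : NodeState) :
    s.IsInfected ↔ s = .infected ∨ s = .explicitN := by
  cases s <;> simp

variable {V : Type*} {G : SimpleGraph V} {Ve : Set V} {u v w z : V} {t τ τ' σ : ℕ}
  {X : V → ℕ → NodeState} {p qu : ℝ} {q : V → ℝ}

theorem mem_subtreeAway_self : u ∈ subtreeAway G u v := by
  simp [subtreeAway]

theorem notMem_subtreeAway_of_ne (hG : G.Connected) (hu : u ≠ v) : v ∉ subtreeAway G u v := by
  intro h
  have h : G.dist v v = G.dist v u + G.dist u v := h
  rw [dist_self] at h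
  exact hu (hG.dist_eq_zero_iff.mp (by omega)).symm

theorem mem_subtreeAway_of_adj_of_dist_eq (hG : G.Connected) (hw : w ∈ subtreeAway G u v)
    (hadj : G.Adj w z) (hz : G.dist v z = G.dist v w + 1) : z ∈ subtreeAway G u v := by
  have hw : G.dist v w = G.dist v u + G.dist u w := hw
  have h₁ : G.dist v z ≤ G.dist v u + G.dist u z := hG.dist_triangle
  have h₂ : G.dist u z ≤ G.dist u w + G.dist w z := hG.dist_triangle
  have h₃ : G.dist w z = 1 := dist_eq_one_iff_adj.mpr hadj
  show G.dist v z = G.dist v u + G.dist u z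
  omega

theorem mem_subtreeAway_of_adj (hT : G.IsTree) (hw : w ∈ subtreeAway G u v)
    (hwu : w ≠ u) (hadj : G.Adj w z) : z ∈ subtreeAway G u v := by
  rcases hT.dist_eq_dist_add_one_of_adj v hadj with hwz | hzw
  · have hw' : G.dist v w = G.dist v u + G.dist u w := hw
    have hzw : G.dist v w = G.dist v z + G.dist z w := by
      rw [dist_eq_one_iff_adj.mpr hadj.symm]; exact hwz
    have : 0 < G.dist u w := hT.connected.pos_dist_of_ne hwu.symm
    exact hT.dist_eq_add_of_dist_eq_add_of_le hw' hzw (by omega)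
  · exact mem_subtreeAway_of_adj_of_dist_eq hT.connected hw hadj hzw

theorem dist_eq_add_of_adj_of_notMem_subtreeAway (hT : G.IsTree) (hadj : G.Adj u w)
    (hw : w ∉ subtreeAway G u v) : G.dist v u = G.dist v w + G.dist w u := by
  rw [dist_eq_one_iff_adj.mpr hadj.symm]
  refine (hT.dist_eq_dist_add_one_of_adj v hadj).resolve_right fun h ↦ hw ?_
  exact mem_subtreeAway_of_adj_of_dist_eq hT.connected mem_subtreeAway_self hadj h

namespace IsInfectionPath

theorem explicitN_of_le (hX : IsInfectionPath G v t X) (hττ' : τ ≤ τ') (hτ' : τ' ≤ t)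
    (h : X w τ = .explicitN) : X w τ' = .explicitN := by
  induction τ', hττ' using Nat.le_induction with
  | base => exact h
  | succ n _ ih => exact hX.explicit_stays w n (by omega) (ih (by omega))

theorem isInfected_of_le (hX : IsInfectionPath G v t X) (hττ' : τ ≤ τ') (hτ' : τ' ≤ t)
    (h : (X w τ).IsInfected) : (X w τ').IsInfected := by
  induction τ', hττ' using Nat.le_induction with
  | base => exact h
  | succ n _ ih =>
    rcases (NodeState.isInfected_iff _).mp (ih (by omega)) with hn | hn
    · simp [hX.infected_stays w n (by omega) hn]
    · simp [hX.explicit_stays w n (by omega) hn]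

theorem mem_of_explicitN (hX : IsInfectionPath G v t X) (hC : ConsistentWith Ve t X)
    (hτ : τ ≤ t) (h : X w τ = .explicitN) : w ∈ Ve :=
  (hC w).mp (hX.explicitN_of_le hτ le_rfl h)

theorem exists_adj_isInfected (hX : IsInfectionPath G v t X) (hτ : τ ≤ t)
    (h : X w τ = .susceptible) : ∃ z, G.Adj w z ∧ (X z τ).IsInfected :=
  (hX.susceptible_iff w τ hτ (by simp [h])).mp h

theorem dist_le_of_isInfected (hG : G.Connected) (hX : IsInfectionPath G v t X) (hτ : τ ≤ t)
    (h : (X w τ).IsInfected) : G.dist v w ≤ τ := by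
  induction τ generalizing w with
  | zero =>
    by_cases hw : w = v
    · simp [hw]
    · exact absurd h (hX.init_uninfected w hw)
  | succ n ih =>
    rcases hX.infect_from_susceptible w n (by omega) h with hn | hn
    · exact (ih (by omega) hn).trans n.le_succ
    · obtain ⟨z, hadj, hz⟩ := hX.exists_adj_isInfected (by omega) hn
      have hvz := ih (by omega) hz
      have hvw : G.dist v w ≤ G.dist v z + G.dist z w := hG.dist_triangle
      rw [dist_eq_one_iff_adj.mpr hadj.symm] at hvw
      omega

theorem isInfected_of_dist_eq_add (hT : G.IsTree) (hX : IsInfectionPath G v t X) (hτ : τ ≤ t)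
    (h : (X w τ).IsInfected) {x : V} (hx : G.dist v w = G.dist v x + G.dist x w) :
    (X x τ).IsInfected := by
  induction τ generalizing w x with
  | zero =>
    by_cases hw : w = v
    · subst hw
      have : x = w := hT.connected.dist_eq_zero_iff.mp (by rw [dist_self] at hx; omega) |>.symm
      exact this ▸ h
    · exact absurd h (hX.init_uninfected w hw)
  | succ n ih =>
    obtain rfl | hxw := eq_or_ne x w
    · exact h
    rcases hX.infect_from_susceptible w n (by omega) h with hn | hn
    · exact hX.isInfected_of_le n.le_succ hτ (ih (by omega) hn hx)
    -- `w` caught the infection from `z`, which is not a child of `w`: else `w` was infected before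
    obtain ⟨z, hadj, hz⟩ := hX.exists_adj_isInfected (by omega) hn
    have hzw : G.dist z w = 1 := dist_eq_one_iff_adj.mpr hadj.symm
    rcases hT.dist_eq_dist_add_one_of_adj v hadj with hw | hw
    · have : 0 < G.dist x w := hT.connected.pos_dist_of_ne hxw
      have hxz := hT.dist_eq_add_of_dist_eq_add_of_le hx (x := x) (z := z) (by omega) (by omega)
      exact hX.isInfected_of_le n.le_succ hτ (ih (by omega) hz hxz)
    · have := ih (by omega) hz (x := w) (by rw [dist_eq_one_iff_adj.mpr hadj]; exact hw)
      simp [hn] at this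

end IsInfectionPath

theorem isInfected_firstInfection (h : (X u τ).IsInfected) :
    (X u (firstInfection X u)).IsInfected :=
  Nat.sInf_mem (s := {τ | (X u τ).IsInfected}) ⟨τ, h⟩

theorem firstInfection_le (h : (X u τ).IsInfected) : firstInfection X u ≤ τ :=
  Nat.sInf_le h

theorem not_isInfected_of_lt_firstInfection (h : τ < firstInfection X u) : ¬ (X u τ).IsInfected :=
  Nat.notMem_of_lt_sInf h

theorem IsInfectionPath.firstInfection_pos (hX : IsInfectionPath G v t X) (hu : u ≠ v)
    (h : (X u τ).IsInfected) : 0 < firstInfection X u :=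
  Nat.pos_of_ne_zero fun h0 ↦ hX.init_uninfected u hu (h0 ▸ isInfected_firstInfection h)

theorem IsInfectionPath.susceptible_firstInfection_sub_one (hX : IsInfectionPath G v t X)
    (hu : u ≠ v) (hτ : τ ≤ t) (h : (X u τ).IsInfected) :
    X u (firstInfection X u - 1) = .susceptible := by
  have hpos := hX.firstInfection_pos hu h
  have hle := firstInfection_le h
  refine (hX.infect_from_susceptible u _ (by omega) ?_).resolve_left
    (not_isInfected_of_lt_firstInfection (by omega))
  rw [Nat.sub_add_cancel hpos]
  exact isInfected_firstInfection h

/-- `X` with the infection of `T_u(v;G)` cancelled: from its first infection time on, `u` stays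
susceptible, and the rest of the subtree is never reached. -/
noncomputable def prune (G : SimpleGraph V) (u v : V) (X : V → ℕ → NodeState) :
    V → ℕ → NodeState :=
  fun w τ ↦
    if w = u then (if τ < firstInfection X u then X u τ else .susceptible)
    else if w ∈ subtreeAway G u v then .nonsusceptible else X w τ

theorem prune_of_notMem (hw : w ∉ subtreeAway G u v) : prune G u v X w τ = X w τ := by
  have hwu : w ≠ u := by rintro rfl; exact hw mem_subtreeAway_self
  simp [prune, hwu, hw]

theorem prune_self_of_lt (h : τ < firstInfection X u) : prune G u v X u τ = X u τ := by
  simp [prune, h]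

theorem prune_self_of_le (h : firstInfection X u ≤ τ) : prune G u v X u τ = .susceptible := by
  simp [prune, Nat.not_lt.mpr h]

theorem prune_of_mem_of_ne (hw : w ∈ subtreeAway G u v) (hwu : w ≠ u) :
    prune G u v X w τ = .nonsusceptible := by
  simp [prune, hwu, hw]

theorem prune_isInfected_iff :
    (prune G u v X w τ).IsInfected ↔ (X w τ).IsInfected ∧ w ∉ subtreeAway G u v := by
  by_cases hw : w ∈ subtreeAway G u v
  · suffices ¬ (prune G u v X w τ).IsInfected by simpa [hw]
    obtain rfl | hwu := eq_or_ne w u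
    · rcases lt_or_ge τ (firstInfection X w) with h | h
      · rw [prune_self_of_lt h]; exact not_isInfected_of_lt_firstInfection h
      · simp [prune_self_of_le h]
    · simp [prune_of_mem_of_ne hw hwu]
  · simp [prune_of_notMem hw, hw]

theorem IsInfectionPath.notMem_subtreeAway_of_adj (hT : G.IsTree)
    (hX : IsInfectionPath G v t X) (hτ : τ ≤ t) (hw : ¬ (X w τ).IsInfected)
    (hwD : w ∈ subtreeAway G u v → w = u) (hadj : G.Adj w z) (hz : (X z τ).IsInfected) :
    z ∉ subtreeAway G u v := by
  -- an infected `z` in the subtree forces `u`, and then the parent `w` of `u`, to be infected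
  intro hzD
  have hu : (X u τ).IsInfected := hX.isInfected_of_dist_eq_add hT hτ hz hzD
  by_cases hwD' : w ∈ subtreeAway G u v
  · exact hw (hwD hwD' ▸ hu)
  obtain rfl : z = u := by
    by_contra hzu
    exact hwD' (mem_subtreeAway_of_adj hT hzD hzu hadj.symm)
  exact hw (hX.isInfected_of_dist_eq_add hT hτ hu
    (dist_eq_add_of_adj_of_notMem_subtreeAway hT hadj.symm hwD'))

theorem IsInfectionPath.prune_susceptible_iff (hT : G.IsTree) (hX : IsInfectionPath G v t X)
    (hu : u ≠ v) (hσ : σ ≤ t) (hinf : (X u σ).IsInfected) (hτ : τ ≤ t)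
    (hw : ¬ (prune G u v X w τ).IsInfected) :
    prune G u v X w τ = .susceptible ↔ ∃ z, G.Adj w z ∧ (prune G u v X z τ).IsInfected := by
  simp only [prune_isInfected_iff]
  have unchanged (heq : prune G u v X w τ = X w τ) (hwD : w ∈ subtreeAway G u v → w = u) :
      prune G u v X w τ = .susceptible ↔
        ∃ z, G.Adj w z ∧ (X z τ).IsInfected ∧ z ∉ subtreeAway G u v := by
    rw [heq] at hw ⊢
    rw [hX.susceptible_iff w τ hτ hw]
    refine exists_congr fun z ↦ and_congr_right fun hadj ↦ ⟨fun hz ↦ ⟨hz, ?_⟩, And.left⟩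
    exact hX.notMem_subtreeAway_of_adj hT hτ hw hwD hadj hz
  by_cases hwD : w ∈ subtreeAway G u v
  · obtain rfl | hwu := eq_or_ne w u
    · rcases lt_or_ge τ (firstInfection X w) with hlt | hle
      · exact unchanged (prune_self_of_lt hlt) fun _ ↦ rfl
      -- the neighbour that infected `w` at its first infection time is outside the subtree
      simp only [prune_self_of_le hle, true_iff]
      have hfi := hX.susceptible_firstInfection_sub_one hu hσ hinf
      have hle' := firstInfection_le hinf
      obtain ⟨z, hadj, hz⟩ := hX.exists_adj_isInfected (by omega) hfi
      refine ⟨z, hadj, hX.isInfected_of_le (by omega) hτ hz, ?_⟩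
      exact hX.notMem_subtreeAway_of_adj hT (by omega) (by simp [hfi]) (fun _ ↦ rfl) hadj hz
    · simp only [prune_of_mem_of_ne hwD hwu, reduceCtorEq, false_iff, not_exists, not_and,
        not_not]
      exact fun z hadj _ ↦ mem_subtreeAway_of_adj hT hwD hwu hadj
  · exact unchanged (prune_of_notMem hwD) fun h ↦ absurd h hwD

theorem isInfectionPath_prune (hT : G.IsTree) (hX : IsInfectionPath G v t X) (hu : u ≠ v)
    (hσ : σ ≤ t) (hinf : (X u σ).IsInfected) : IsInfectionPath G v t (prune G u v X) := by
  have hv := notMem_subtreeAway_of_ne hT.connected hu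
  have outside {w τ} (h : (prune G u v X w τ).IsInfected) (τ' : ℕ) :
      prune G u v X w τ' = X w τ' :=
    prune_of_notMem (prune_isInfected_iff.mp h).2
  refine ⟨?_, fun w hw h ↦ ?_, fun w τ hτ hw ↦ hX.prune_susceptible_iff hT hu hσ hinf hτ hw,
    fun w τ hτ h ↦ ?_, fun w τ hτ h ↦ ?_, fun w τ hτ h ↦ ?_⟩
  · rw [prune_of_notMem hv]; exact hX.source_infected
  · exact hX.init_uninfected w hw (prune_isInfected_iff.mp h).1
  · have e := outside (w := w) (τ := τ) (by simp [h])
    simp only [e] at h ⊢; exact hX.infected_stays w τ hτ h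
  · have e := outside (w := w) (τ := τ) (by simp [h])
    simp only [e] at h ⊢; exact hX.explicit_stays w τ hτ h
  · have e := outside h
    simp only [e] at h ⊢; exact hX.infect_from_susceptible w τ hτ h

theorem consistentWith_prune (hC : ConsistentWith Ve t X)
    (hD : Disjoint (subtreeAway G u v) Ve) : ConsistentWith Ve t (prune G u v X) := by
  intro w
  by_cases hw : w ∈ subtreeAway G u v
  · have : ¬ (prune G u v X w t).IsInfected := fun h ↦ (prune_isInfected_iff.mp h).2 hw
    simp only [Set.disjoint_left.mp hD hw, iff_false]
    exact fun h ↦ this (h ▸ trivial)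
  · rw [prune_of_notMem hw]; exact hC w

theorem transProb_nonneg (hp0 : 0 ≤ p) (hp1 : p ≤ 1) (hq0 : 0 ≤ qu) (hq1 : qu ≤ 1)
    (s s' : NodeState) : 0 ≤ transProb p qu s s' := by
  cases s <;> cases s' <;> simp only [transProb] <;> nlinarith

theorem transProb_le_one (hp0 : 0 ≤ p) (hp1 : p ≤ 1) (hq0 : 0 ≤ qu) (hq1 : qu ≤ 1)
    (s s' : NodeState) : transProb p qu s s' ≤ 1 := by
  cases s <;> cases s' <;> simp only [transProb] <;> nlinarith

theorem transProb_susceptible_le (hp1 : p ≤ 1) (hpq : p * (1 - qu) ≤ 1 - p) {s : NodeState}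
    (hs : s ≠ .explicitN) : transProb p qu .susceptible s ≤ 1 - p := by
  cases s <;> simp_all [transProb]

theorem eq_susceptible_or_isInfected_of_transProb_ne_one {s s' : NodeState}
    (h : transProb p qu s s' ≠ 1) : s = .susceptible ∨ s.IsInfected ∨ s'.IsInfected := by
  cases s <;> cases s' <;> simp_all [transProb, NodeState.IsInfected]

noncomputable def nodeProb (p qu : ℝ) (t : ℕ) (x : ℕ → NodeState) : ℝ :=
  ∏ τ ∈ Finset.range t, transProb p qu (x τ) (x (τ + 1))

theorem nodeProb_nonneg (hp0 : 0 ≤ p) (hp1 : p ≤ 1) (hq0 : 0 ≤ qu) (hq1 : qu ≤ 1)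
    (x : ℕ → NodeState) : 0 ≤ nodeProb p qu t x :=
  Finset.prod_nonneg fun _ _ ↦ transProb_nonneg hp0 hp1 hq0 hq1 _ _

theorem IsInfectionPath.mulSupport_nodeProb_subset (hG : G.Connected)
    (hX : IsInfectionPath G v t X) :
    Function.mulSupport (fun w ↦ nodeProb p (q w) t (X w)) ⊆ {w | G.dist v w ≤ t + 1} := by
  intro w hw
  obtain ⟨τ, hτ, hne⟩ := Finset.exists_ne_one_of_prod_ne_one hw
  have hτ : τ < t := Finset.mem_range.mp hτ
  show G.dist v w ≤ t + 1
  rcases eq_susceptible_or_isInfected_of_transProb_ne_one hne with hs | hi | hi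
  · obtain ⟨z, hadj, hz⟩ := hX.exists_adj_isInfected hτ.le hs
    have := hX.dist_le_of_isInfected hG hτ.le hz
    have : G.dist v w ≤ G.dist v z + G.dist z w := hG.dist_triangle
    rw [dist_eq_one_iff_adj.mpr hadj.symm] at this
    omega
  · have := hX.dist_le_of_isInfected hG hτ.le hi; omega
  · have := hX.dist_le_of_isInfected hG hτ hi; omega

theorem pathProb_eq_mul_prod {B : Finset V}
    (hB : Function.mulSupport (fun w ↦ nodeProb p (q w) t (X w)) ⊆ B) :
    pathProb p q v t X =
      (if X v 0 = .explicitN then q v else 1 - q v) * ∏ w ∈ B, nodeProb p (q w) t (X w) := by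
  rw [← finprod_eq_prod_of_mulSupport_subset _ hB]
  rfl

theorem IsInfectionPath.exists_susceptible_mem_subtreeAway (hT : G.IsTree)
    (hloc : ∀ x, (G.neighborSet x).Finite) (hdeg : ∀ x, (G.neighborSet x).Nontrivial)
    (hX : IsInfectionPath G v t X) (hτ : τ ≤ t) (hu : (X u τ).IsInfected) :
    ∃ c ∈ subtreeAway G u v, c ≠ u ∧ X c τ = .susceptible ∧ G.dist v c ≤ τ + 1 := by
  -- a child of the infected node of the subtree farthest from `v`
  set S := {d | d ∈ subtreeAway G u v ∧ (X d τ).IsInfected}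
  have hS : S.Finite := (hT.connected.finite_setOf_dist_le hloc v τ).subset
    fun d hd ↦ hX.dist_le_of_isInfected hT.connected hτ hd.2
  obtain ⟨d, ⟨hdD, hd⟩, hmax⟩ :=
    Set.exists_max_image S (G.dist v) hS ⟨u, mem_subtreeAway_self, hu⟩
  obtain ⟨c, hadj, hc⟩ := hT.exists_adj_dist_eq_add_one v (hdeg d)
  have hcD := mem_subtreeAway_of_adj_of_dist_eq hT.connected hdD hadj hc
  have hcinf : ¬ (X c τ).IsInfected := fun h ↦ by have := hmax c ⟨hcD, h⟩; omega
  refine ⟨c, hcD, ?_, (hX.susceptible_iff c τ hτ hcinf).mpr ⟨d, hadj.symm, hd⟩, ?_⟩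
  · rintro rfl
    have : G.dist v d = G.dist v c + G.dist c d := hdD
    omega
  · have := hX.dist_le_of_isInfected hT.connected hτ hd
    omega

theorem nodeProb_mul_pow_le_nodeProb_prune (hp0 : 0 ≤ p) (hp1 : p ≤ 1) (hq0 : 0 ≤ q u)
    (hq1 : q u ≤ 1) (hpq : p * (1 - q u) ≤ 1 - p) (hX : IsInfectionPath G v t X)
    (hC : ConsistentWith Ve t X) (huVe : u ∉ Ve) (hu : u ≠ v) (hσ : σ ≤ t)
    (hinf : (X u σ).IsInfected) :
    nodeProb p (q u) t (X u) * (1 - p) ^ ((Finset.range t).filter (firstInfection X u ≤ ·)).card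
      ≤ nodeProb p (q u) t (prune G u v X u) := by
  have hpos := hX.firstInfection_pos hu hinf
  have hle := firstInfection_le hinf
  rw [← Finset.prod_const, Finset.prod_filter, nodeProb, nodeProb, ← Finset.prod_mul_distrib]
  refine Finset.prod_le_prod (fun τ _ ↦ mul_nonneg (transProb_nonneg hp0 hp1 hq0 hq1 _ _)
    (by split_ifs <;> linarith)) fun τ hτ ↦ ?_
  have hτ : τ < t := Finset.mem_range.mp hτ
  rcases lt_trichotomy (τ + 1) (firstInfection X u) with h | h | h
  · rw [if_neg (by omega), mul_one, prune_self_of_lt (by omega), prune_self_of_lt h]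
  · have hs : X u τ = .susceptible := by
      rw [show τ = firstInfection X u - 1 by omega]
      exact hX.susceptible_firstInfection_sub_one hu hσ hinf
    rw [if_neg (by omega), mul_one, prune_self_of_lt (by omega), prune_self_of_le h.ge, hs]
    exact transProb_susceptible_le hp1 hpq fun he ↦ huVe (hX.mem_of_explicitN hC hτ he)
  · rw [if_pos (by omega), prune_self_of_le (by omega), prune_self_of_le (by omega)]
    exact mul_le_of_le_one_left (by linarith) (transProb_le_one hp0 hp1 hq0 hq1 _ _)

/-- The infection of `u` costs every later slot a factor `1 - p` inside `T_u(v;G) \ {u}`, paid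
by a susceptible node of the subtree. -/
theorem prod_nodeProb_subtreeAway_erase_le_pow (hT : G.IsTree)
    (hloc : ∀ x, (G.neighborSet x).Finite) (hdeg : ∀ x, (G.neighborSet x).Nontrivial)
    (hp0 : 0 ≤ p) (hp1 : p ≤ 1) (hq0 : ∀ w, 0 ≤ q w) (hq1 : ∀ w, q w ≤ 1)
    (hpq : ∀ w, p * (1 - q w) ≤ 1 - p) (hX : X ∈ pathsFor G Ve v t)
    (hD : Disjoint (subtreeAway G u v) Ve) (hinf : (X u σ).IsInfected) {B : Finset V} (hB : ∀ w, G.dist v w ≤ t + 1 → w ∈ B) :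
    ∏ w ∈ (B.filter (· ∈ subtreeAway G u v)).erase u, nodeProb p (q w) t (X w)
      ≤ (1 - p) ^ ((Finset.range t).filter (firstInfection X u ≤ ·)).card := by
  refine Finset.prod_prod_le_pow_card (Finset.filter_subset _ _)
    (fun w _ _ _ ↦ transProb_nonneg hp0 hp1 (hq0 w) (hq1 w) _ _)
    (fun w _ _ _ ↦ transProb_le_one hp0 hp1 (hq0 w) (hq1 w) _ _) fun τ hτ ↦ ?_
  obtain ⟨hτt, hτ⟩ := Finset.mem_filter.mp hτ
  have hτt : τ < t := Finset.mem_range.mp hτt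
  obtain ⟨c, hcD, hcu, hc, hcdist⟩ := hX.1.exists_susceptible_mem_subtreeAway hT hloc hdeg hτt.le
    (hX.1.isInfected_of_le hτ hτt.le (isInfected_firstInfection hinf))
  refine ⟨c, Finset.mem_erase.mpr ⟨hcu, Finset.mem_filter.mpr ⟨hB c (by omega), hcD⟩⟩, ?_⟩
  rw [hc]
  exact transProb_susceptible_le hp1 (hpq c)
    fun he ↦ Set.disjoint_left.mp hD hcD (hX.1.mem_of_explicitN hX.2 hτt he)

theorem prod_nodeProb_subtreeAway_le_prune (hT : G.IsTree)
    (hloc : ∀ x, (G.neighborSet x).Finite) (hdeg : ∀ x, (G.neighborSet x).Nontrivial)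
    (hp0 : 0 ≤ p) (hp1 : p ≤ 1) (hq0 : ∀ w, 0 ≤ q w) (hq1 : ∀ w, q w ≤ 1)
    (hpq : ∀ w, p * (1 - q w) ≤ 1 - p) (hX : X ∈ pathsFor G Ve v t)
    (hD : Disjoint (subtreeAway G u v) Ve) (hu : u ≠ v) (hσ : σ ≤ t)
    (hinf : (X u σ).IsInfected) {B : Finset V} (hB : ∀ w, G.dist v w ≤ t + 1 → w ∈ B) :
    ∏ w ∈ B.filter (· ∈ subtreeAway G u v), nodeProb p (q w) t (X w) ≤
      ∏ w ∈ B.filter (· ∈ subtreeAway G u v), nodeProb p (q w) t (prune G u v X w) := by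
  have huB : u ∈ B.filter (· ∈ subtreeAway G u v) := by
    have := hX.1.dist_le_of_isInfected hT.connected hσ hinf
    exact Finset.mem_filter.mpr ⟨hB u (by omega), mem_subtreeAway_self⟩
  have hrest : ∏ w ∈ (B.filter (· ∈ subtreeAway G u v)).erase u,
      nodeProb p (q w) t (prune G u v X w) = 1 := by
    refine Finset.prod_eq_one fun w hw ↦ Finset.prod_eq_one fun τ _ ↦ ?_
    obtain ⟨hwu, hw⟩ := Finset.mem_erase.mp hw
    rw [prune_of_mem_of_ne (Finset.mem_filter.mp hw).2 hwu,
      prune_of_mem_of_ne (Finset.mem_filter.mp hw).2 hwu]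
    rfl
  rw [← Finset.mul_prod_erase _ _ huB, ← Finset.mul_prod_erase _ _ huB, hrest, mul_one]
  calc _ ≤ nodeProb p (q u) t (X u) *
          (1 - p) ^ ((Finset.range t).filter (firstInfection X u ≤ ·)).card :=
        mul_le_mul_of_nonneg_left
          (prod_nodeProb_subtreeAway_erase_le_pow hT hloc hdeg hp0 hp1 hq0 hq1 hpq hX hD hinf hB)
          (nodeProb_nonneg hp0 hp1 (hq0 u) (hq1 u) _)
    _ ≤ nodeProb p (q u) t (prune G u v X u) :=
        nodeProb_mul_pow_le_nodeProb_prune hp0 hp1 (hq0 u) (hq1 u) (hpq u) hX.1 hX.2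
          (Set.disjoint_left.mp hD mem_subtreeAway_self) hu hσ hinf

theorem pathProb_le_pathProb_prune (hT : G.IsTree) (hloc : ∀ x, (G.neighborSet x).Finite)
    (hdeg : ∀ x, (G.neighborSet x).Nontrivial) (hp0 : 0 ≤ p) (hp1 : p ≤ 1)
    (hq0 : ∀ w, 0 ≤ q w) (hq1 : ∀ w, q w ≤ 1) (hpq : ∀ w, p * (1 - q w) ≤ 1 - p)
    (hX : X ∈ pathsFor G Ve v t) (hD : Disjoint (subtreeAway G u v) Ve) (hu : u ≠ v)
    (hσ : σ ≤ t) (hinf : (X u σ).IsInfected) :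
    pathProb p q v t X ≤ pathProb p q v t (prune G u v X) := by
  have hball := hT.connected.finite_setOf_dist_le hloc v (t + 1)
  have hY := isInfectionPath_prune hT hX.1 hu hσ hinf
  rw [pathProb_eq_mul_prod ((hX.1.mulSupport_nodeProb_subset hT.connected).trans
      hball.coe_toFinset.ge),
    pathProb_eq_mul_prod ((hY.mulSupport_nodeProb_subset hT.connected).trans
      hball.coe_toFinset.ge),
    prune_of_notMem (notMem_subtreeAway_of_ne hT.connected hu)]
  refine mul_le_mul_of_nonneg_left ?_ (by split_ifs <;> linarith [hq0 v, hq1 v])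
  rw [← Finset.prod_filter_mul_prod_filter_not _ (· ∈ subtreeAway G u v),
    ← Finset.prod_filter_mul_prod_filter_not _ (· ∈ subtreeAway G u v)
      (fun w ↦ nodeProb p (q w) t (prune G u v X w))]
  have houtside : ∀ w ∈ hball.toFinset.filter (· ∉ subtreeAway G u v),
      nodeProb p (q w) t (X w) = nodeProb p (q w) t (prune G u v X w) := fun w hw ↦
    congrArg _ (funext fun _ ↦ (prune_of_notMem (Finset.mem_filter.mp hw).2).symm)
  rw [Finset.prod_congr rfl houtside]
  exact mul_le_mul_of_nonneg_right
    (prod_nodeProb_subtreeAway_le_prune hT hloc hdeg hp0 hp1 hq0 hq1 hpq hX hD hu hσ hinf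
      fun w hw ↦ hball.mem_toFinset.mpr hw)
    (Finset.prod_nonneg fun w _ ↦ nodeProb_nonneg hp0 hp1 (hq0 w) (hq1 w) _)

theorem IsMostLikely.prune (hT : G.IsTree) (hloc : ∀ x, (G.neighborSet x).Finite)
    (hdeg : ∀ x, (G.neighborSet x).Nontrivial) (hp0 : 0 ≤ p) (hp1 : p ≤ 1)
    (hq0 : ∀ w, 0 ≤ q w) (hq1 : ∀ w, q w ≤ 1) (hpq : ∀ w, p * (1 - q w) ≤ 1 - p)
    (hX : IsMostLikely G p q Ve v t X) (hD : Disjoint (subtreeAway G u v) Ve) (hu : u ≠ v)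
    (hσ : σ ≤ t) (hinf : (X u σ).IsInfected) : IsMostLikely G p q Ve v t (prune G u v X) :=
  ⟨⟨isInfectionPath_prune hT hX.1.1 hu hσ hinf, consistentWith_prune hX.1.2 hD⟩,
    fun Y hY ↦ (hX.2 Y hY).trans
      (pathProb_le_pathProb_prune hT hloc hdeg hp0 hp1 hq0 hq1 hpq hX.1 hD hu hσ hinf)⟩

def everInfected (X : V → ℕ → NodeState) (t : ℕ) : Set V :=
  {w | ∃ τ ≤ t, (X w τ).IsInfected}

theorem IsInfectionPath.finite_everInfected (hG : G.Connected)
    (hloc : ∀ x, (G.neighborSet x).Finite) (hX : IsInfectionPath G v t X) :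
    (everInfected X t).Finite :=
  (hG.finite_setOf_dist_le hloc v t).subset fun _ ⟨_, hτ, h⟩ ↦
    (hX.dist_le_of_isInfected hG hτ h).trans hτ

theorem ncard_everInfected_prune_lt (hG : G.Connected) (hloc : ∀ x, (G.neighborSet x).Finite)
    (hX : IsInfectionPath G v t X) (hσ : σ ≤ t) (hinf : (X u σ).IsInfected) :
    (everInfected (prune G u v X) t).ncard < (everInfected X t).ncard := by
  have hsub : everInfected (prune G u v X) t ⊆ everInfected X t :=
    fun _ ⟨τ, hτ, h⟩ ↦ ⟨τ, hτ, (prune_isInfected_iff.mp h).1⟩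
  refine Set.ncard_lt_ncard ((Set.ssubset_iff_of_subset hsub).mpr ⟨u, ⟨σ, hσ, hinf⟩, ?_⟩)
    (hX.finite_everInfected hG hloc)
  rintro ⟨τ, -, h⟩
  exact (prune_isInfected_iff.mp h).2 mem_subtreeAway_self

/-- The part of `X` that `pathProb p q v t X` can depend on. -/
noncomputable def truncate (G : SimpleGraph V) (v : V) (t : ℕ) (X : V → ℕ → NodeState) :
    V → ℕ → NodeState :=
  fun w τ ↦ if G.dist v w ≤ t + 1 ∧ τ ≤ t then X w τ else .nonsusceptible

theorem pathProb_truncate (hG : G.Connected) (hX : IsInfectionPath G v t X) :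
    pathProb p q v t (truncate G v t X) = pathProb p q v t X := by
  have h0 : truncate G v t X v 0 = X v 0 := by simp [truncate]
  rw [pathProb, pathProb, h0]
  congr 1
  refine finprod_congr fun w ↦ ?_
  by_cases hw : G.dist v w ≤ t + 1
  · refine Finset.prod_congr rfl fun τ hτ ↦ ?_
    have hτ : τ < t := Finset.mem_range.mp hτ
    simp only [truncate, hw, true_and, if_pos hτ.le, if_pos (Nat.succ_le_of_lt hτ)]
  · have h1 := Function.notMem_mulSupport.mp
      fun h ↦ hw (hX.mulSupport_nodeProb_subset (p := p) (q := q) hG h)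
    refine Eq.trans (Finset.prod_eq_one fun τ _ ↦ ?_) h1.symm
    simp only [truncate, hw, false_and, if_false]
    rfl

theorem finite_range_truncate (hG : G.Connected) (hloc : ∀ x, (G.neighborSet x).Finite)
    (v : V) (t : ℕ) : (Set.range (truncate G v t)).Finite := by
  have := (hG.finite_setOf_dist_le hloc v (t + 1)).to_subtype
  let extend (Z : {w | G.dist v w ≤ t + 1} → Fin (t + 1) → NodeState) : V → ℕ → NodeState :=
    fun w τ ↦ if h : G.dist v w ≤ t + 1 ∧ τ ≤ t then Z ⟨w, h.1⟩ ⟨τ, Nat.lt_succ_of_le h.2⟩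
      else .nonsusceptible
  refine (Set.finite_range extend).subset ?_
  rintro _ ⟨X, rfl⟩
  refine ⟨fun w τ ↦ X w τ, funext fun w ↦ funext fun τ ↦ ?_⟩
  simp only [extend, truncate, dite_eq_ite]

theorem exists_isMostLikely (hG : G.Connected) (hloc : ∀ x, (G.neighborSet x).Finite)
    (ht : t ∈ feasibleTimes G Ve v) : ∃ X, IsMostLikely G p q Ve v t X := by
  have himg : (pathProb p q v t '' pathsFor G Ve v t).Finite :=
    ((finite_range_truncate hG hloc v t).image _).subset fun _ ⟨X, hX, hXp⟩ ↦
      ⟨truncate G v t X, ⟨X, rfl⟩, (pathProb_truncate hG hX.1).trans hXp⟩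
  obtain ⟨_, ⟨X, hX, rfl⟩, hmax⟩ := Set.exists_max_image _ id himg (ht.image _)
  exact ⟨X, hX, fun Y hY ↦ hmax _ ⟨Y, hY, rfl⟩⟩

end SILimited

theorem most_likely_path_avoids_nonobservable_subtrees_general
    {V : Type*} (G : SimpleGraph V) (hT : G.IsTree)
    (hloc : ∀ u : V, (G.neighborSet u).Finite)
    (hdeg : ∀ u : V, 2 ≤ (G.neighborSet u).ncard)
    (p : ℝ) (hp0 : 0 < p) (hp1 : p < 1)
    (q : V → ℝ) (hq0 : ∀ u, max 0 (2 - 1 / p) ≤ q u) (hq1 : ∀ u, q u ≤ 1)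
    (Ve : Set V) (hVene : Ve.Nonempty)
    (v : V) (t : ℕ) (ht : t ∈ feasibleTimes G Ve v) :
    ∃ X, IsMostLikely G p q Ve v t X ∧
      ∀ u : V, subtreeAway G u v ∩ Ve = ∅ → ∀ τ ≤ t, ¬ (X u τ).IsInfected := by
  have hdeg' : ∀ x, (G.neighborSet x).Nontrivial := fun x ↦
    (Set.one_lt_ncard_iff_nontrivial_and_finite.mp (hdeg x)).1
  have hq0' : ∀ u, 0 ≤ q u := fun u ↦ (le_max_left _ _).trans (hq0 u)
  have hpq : ∀ u, p * (1 - q u) ≤ 1 - p := fun u ↦ by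
    have h := (le_max_right _ _).trans (hq0 u)
    have : p * (1 / p) = 1 := by field_simp
    nlinarith
  obtain ⟨X, hX, hXmin⟩ := exists_minimalFor_of_wellFoundedLT (IsMostLikely G p q Ve v t)
    (fun X ↦ (everInfected X t).ncard) (exists_isMostLikely hT.connected hloc ht)
  refine ⟨X, hX, fun u hD τ hτ hinf ↦ ?_⟩
  have hD := Set.disjoint_iff_inter_eq_empty.mpr hD
  have hu : u ≠ v := by
    rintro rfl
    obtain ⟨e, he⟩ := hVene
    exact Set.disjoint_left.mp hD (by simp [subtreeAway]) he
  have hY := hX.prune hT hloc hdeg' hp0.le hp1.le hq0' hq1 hpq hD hu hτ hinf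
  have hlt := ncard_everInfected_prune_lt hT.connected hloc hX.1.1 hτ hinf
  exact hlt.not_ge (hXmin hY hlt.le)

/-- If `G` is a tree, then for any node `v` and any feasible elapsed time
`t ∈ 𝒯_v`, there exists a most likely infection path `X^t` for `(v,t)` such that every node
`u` whose subtree `T_u(v;G)` is non-observable (contains no explicit node) is never infected
in `X^t`. -/
theorem most_likely_path_avoids_nonobservable_subtrees
    {V : Type*} [Infinite V] (G : SimpleGraph V) (hT : G.IsTree)
    (hloc : ∀ u : V, (G.neighborSet u).Finite)
    (hdeg : ∀ u : V, 2 ≤ (G.neighborSet u).ncard)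
    (p : ℝ) (hp0 : 0 < p) (hp1 : p < 1)
    (q : V → ℝ) (hq0 : ∀ u, max 0 (2 - 1 / p) ≤ q u) (hq1 : ∀ u, q u ≤ 1)
    (Ve : Set V) (hVene : Ve.Nonempty) (hVefin : Ve.Finite)
    (v : V) (t : ℕ) (ht : t ∈ feasibleTimes G Ve v) :
    ∃ X, IsMostLikely G p q Ve v t X ∧
      ∀ u : V, subtreeAway G u v ∩ Ve = ∅ → ∀ τ ≤ t, ¬ (X u τ).IsInfected :=
  most_likely_path_avoids_nonobservable_subtrees_general G hT hloc hdeg p hp0 hp1 q hq0 hq1 Ve hVene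
    v t ht
end

section
/- Suppose the underlying network G is a tree. Then for any node v ∈ V, the set of feasible elapsed times is exactly 𝒯_v = {t ∈ ℕ : t ≥ d̄(v, V_e)}, i.e., an infection path starting at v and consistent with V_e exists at elapsed time t if and only if t ≥ d̄(v, V_e). -/
open scoped Classical

open SILimited

/-!
Infection crosses at most one edge per time slot, so a node infected by time `τ` lies within
distance `τ` of the source; in particular every observed explicit node lies within distance `t`.
Conversely, if `t ≥ d̄(v, Ve)`, the breadth-first path that infects each node exactly at time
`d(v, u)`, explicitly precisely on `Ve`, is consistent with `Ve` at time `t`.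
-/

namespace SimpleGraph

variable {V : Type*} {G : SimpleGraph V}

lemma Adj.dist_le_dist_add_one {u w : V} (hadj : G.Adj w u) (v : V) :
    G.dist v u ≤ G.dist v w + 1 := by
  simpa [dist_eq_one_iff_adj.mpr hadj] using hadj.reachable.dist_triangle_right v

lemma exists_adj_dist_le_of_dist_eq_succ {u v : V} {n : ℕ} (h : G.dist v u = n + 1) :
    ∃ w, G.Adj u w ∧ G.dist v w ≤ n := by
  obtain ⟨p, hp⟩ := exists_walk_of_dist_ne_zero (G := G) (u := u) (v := v)
    (by rw [dist_comm, h]; exact n.succ_ne_zero)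
  rw [dist_comm, h] at hp
  cases p with
  | nil => simp at hp
  | cons hadj q =>
    refine ⟨_, hadj, ?_⟩
    rw [dist_comm]
    simpa [Walk.length_cons] using (dist_le q).trans_eq (by simpa using hp)

end SimpleGraph

namespace SILimited

variable {V : Type*} {G : SimpleGraph V} {Ve : Set V} {v : V} {t : ℕ}

lemma dbar_le_iff_of_finite {A : Set V} (hA : A.Finite) {n : ℕ} :
    dbar G v A ≤ n ↔ ∀ u ∈ A, G.dist v u ≤ n :=
  (csSup_le_iff' (hA.image _).bddAbove).trans Set.forall_mem_image

lemma IsInfectionPath.dist_le_of_isInfected_s4 {X : V → ℕ → NodeState}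
    (hX : IsInfectionPath G v t X) {u : V} {τ : ℕ} (hτ : τ ≤ t) (hu : (X u τ).IsInfected) :
    G.dist v u ≤ τ := by
  induction τ generalizing u with
  | zero =>
    by_cases huv : u = v
    · simp [huv]
    · exact absurd hu (hX.init_uninfected u huv)
  | succ τ ih =>
    rcases hX.infect_from_susceptible u τ hτ hu with hinf | hsus
    · exact (ih (by omega) hinf).trans τ.le_succ
    · have hni : ¬ (X u τ).IsInfected := by simp [hsus, NodeState.IsInfected]
      obtain ⟨w, hadj, hw⟩ := (hX.susceptible_iff u τ (by omega) hni).mp hsus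
      exact (hadj.symm.dist_le_dist_add_one v).trans (by simpa using ih (by omega) hw)

lemma ConsistentWith.dist_le {X : V → ℕ → NodeState} (hX : IsInfectionPath G v t X)
    (hC : ConsistentWith Ve t X) {u : V} (hu : u ∈ Ve) : G.dist v u ≤ t :=
  hX.dist_le_of_isInfected_s4 le_rfl (by simp [(hC u).mpr hu, NodeState.IsInfected])

section distPath

variable (G) (Ve) (v) in
noncomputable def distPath : V → ℕ → NodeState :=
  fun u τ =>
    if G.dist v u ≤ τ then (if u ∈ Ve then .explicitN else .infected)
    else if G.dist v u = τ + 1 then .susceptible else .nonsusceptible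

variable {u : V} {τ : ℕ}

lemma distPath_isInfected_iff : (distPath G Ve v u τ).IsInfected ↔ G.dist v u ≤ τ := by
  unfold distPath
  split_ifs <;> simp_all [NodeState.IsInfected]

lemma distPath_eq_susceptible_iff : distPath G Ve v u τ = .susceptible ↔ G.dist v u = τ + 1 := by
  unfold distPath
  split_ifs <;> simp_all <;> omega

lemma distPath_eq_explicitN_iff :
    distPath G Ve v u τ = .explicitN ↔ G.dist v u ≤ τ ∧ u ∈ Ve := by
  unfold distPath
  split_ifs <;> simp_all

lemma distPath_eq_infected_iff :
    distPath G Ve v u τ = .infected ↔ G.dist v u ≤ τ ∧ u ∉ Ve := by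
  unfold distPath
  split_ifs <;> simp_all

variable (t) in
lemma isInfectionPath_distPath (hconn : G.Connected) :
    IsInfectionPath G v t (distPath G Ve v) where
  source_infected := by simp [distPath_isInfected_iff]
  init_uninfected u hu := by
    simpa [distPath_isInfected_iff, hconn.dist_eq_zero_iff] using Ne.symm hu
  susceptible_iff u τ _ hni := by
    rw [distPath_isInfected_iff, not_le] at hni
    rw [distPath_eq_susceptible_iff]
    constructor
    · intro hd
      obtain ⟨w, hadj, hw⟩ := SimpleGraph.exists_adj_dist_le_of_dist_eq_succ hd
      exact ⟨w, hadj, distPath_isInfected_iff.mpr hw⟩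
    · rintro ⟨w, hadj, hw⟩
      have := hadj.symm.dist_le_dist_add_one v
      have := distPath_isInfected_iff.mp hw
      omega
  infected_stays u τ _ h := by
    rw [distPath_eq_infected_iff] at h ⊢
    exact ⟨h.1.trans τ.le_succ, h.2⟩
  explicit_stays u τ _ h := by
    rw [distPath_eq_explicitN_iff] at h ⊢
    exact ⟨h.1.trans τ.le_succ, h.2⟩
  infect_from_susceptible u τ _ h := by
    rw [distPath_isInfected_iff] at h ⊢
    rw [distPath_eq_susceptible_iff]
    omega

lemma consistentWith_distPath (h : ∀ u ∈ Ve, G.dist v u ≤ t) :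
    ConsistentWith Ve t (distPath G Ve v) := fun u => by
  rw [distPath_eq_explicitN_iff]
  exact ⟨And.right, fun hu => ⟨h u hu, hu⟩⟩

end distPath

end SILimited

theorem feasibleTimes_eq_Ici_infection_range_general
    {V : Type*} (G : SimpleGraph V) (hT : G.IsTree)
    (Ve : Set V) (hVefin : Ve.Finite)
    (v : V) :
    feasibleTimes G Ve v = {t : ℕ | dbar G v Ve ≤ t} := by
  ext t
  rw [Set.mem_ofPred_eq, dbar_le_iff_of_finite hVefin]
  constructor
  · rintro ⟨X, hX, hC⟩ u hu
    exact hC.dist_le hX hu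
  · intro h
    exact ⟨distPath G Ve v, isInfectionPath_distPath t hT.connected, consistentWith_distPath h⟩

/-- If `G` is a tree, then for any node `v`, the set of feasible elapsed times
is exactly `𝒯_v = {t : ℕ | t ≥ d̄(v, Ve)}`: a consistent infection path with source `v`
exists at elapsed time `t` if and only if `t ≥ d̄(v, Ve)`. -/
theorem feasibleTimes_eq_Ici_infection_range
    {V : Type*} [Infinite V] (G : SimpleGraph V) (hT : G.IsTree)
    (hloc : ∀ u : V, (G.neighborSet u).Finite)
    (hdeg : ∀ u : V, 2 ≤ (G.neighborSet u).ncard)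
    (p : ℝ) (hp0 : 0 < p) (hp1 : p < 1)
    (q : V → ℝ) (hq0 : ∀ u, max 0 (2 - 1 / p) ≤ q u) (hq1 : ∀ u, q u ≤ 1)
    (Ve : Set V) (hVene : Ve.Nonempty) (hVefin : Ve.Finite)
    (v : V) :
    feasibleTimes G Ve v = {t : ℕ | dbar G v Ve ≤ t} :=
  feasibleTimes_eq_Ici_infection_range_general G hT Ve hVefin v
end

section
/- Let H be a finite tree and V_e a nonempty subset of its vertices such that H is the minimal connected subtree spanning V_e. Suppose u and v are neighboring nodes in H with d̄(v, V_e) < d̄(u, V_e). Then every node l ∈ V_e achieving the maximum distance from u, i.e., every l ∈ argmax_{x ∈ V_e} d(u,x), lies in the subtree T_v(u;H). -/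
theorem SimpleGraph.IsTree.dist_eq_dist_add_one_of_adj_of_dist_lt {V : Type*}
    {G : SimpleGraph V} (hG : G.IsTree) {u v w : V} (hadj : G.Adj u v)
    (hlt : G.dist v w < G.dist u w) : G.dist u w = G.dist v w + 1 := by
  rw [G.dist_comm (u := u), G.dist_comm (u := v)] at hlt ⊢
  exact (hG.dist_eq_dist_add_one_of_adj w hadj).resolve_right (by omega)

-- `l ∈ T_v(u;H)` is encoded as `d(u,l) = d(v,l) + 1`.
theorem farthest_explicit_nodes_in_neighbor_subtree_general
    {V : Type*} (H : SimpleGraph V) (hT : H.IsTree)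
    (Ve : Finset V)
    (u v : V) (hadj : H.Adj u v)
    (hlt : Ve.sup (H.dist v) < Ve.sup (H.dist u)) :
    ∀ l ∈ Ve, H.dist u l = Ve.sup (H.dist u) → H.dist u l = H.dist v l + 1 := by
  intro l hl hmax
  have hv : H.dist v l ≤ Ve.sup (H.dist v) := Finset.le_sup hl
  exact hT.dist_eq_dist_add_one_of_adj_of_dist_lt hadj (by omega)

/-- Let `H` be a finite tree and `Ve` a nonempty subset of its vertices such that
`H` is the minimal connected subtree spanning `Ve` (equivalently, every leaf of `H` is in `Ve`).
If `u` and `v` are neighboring nodes of `H` with `d̄(v,Ve) < d̄(u,Ve)`, then every `l ∈ Ve`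
achieving the maximum distance from `u` lies in the subtree `T_v(u;H)` (the component of `v`
after removing the edge `uv`, i.e., the nodes `l` with `d(u,l) = d(v,l) + 1`). -/
theorem farthest_explicit_nodes_in_neighbor_subtree
    {V : Type*} [Fintype V] (H : SimpleGraph V) (hT : H.IsTree)
    (Ve : Finset V) (hVe : Ve.Nonempty)
    (hmin : ∀ w : V, (H.neighborSet w).ncard ≤ 1 → w ∈ Ve)
    (u v : V) (hadj : H.Adj u v)
    (hlt : Ve.sup (H.dist v) < Ve.sup (H.dist u)) :
    ∀ l ∈ Ve, H.dist u l = Ve.sup (H.dist u) → H.dist u l = H.dist v l + 1 :=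
  farthest_explicit_nodes_in_neighbor_subtree_general H hT Ve u v hadj hlt
end

section
/- Let H be a finite tree, V_e a nonempty subset of its vertices with H the minimal connected subtree spanning V_e, and suppose ŝ is the unique Jordan center of V_e in H. Then for any simple path (ŝ, v_1, v_2, …, v_m) in H with m ≥ 1, the infection ranges strictly increase along the path: d̄(ŝ, V_e) < d̄(v_1, V_e) < … < d̄(v_m, V_e). -/
/-!
Along a path `w – u – v` in a tree the infection range cannot have a weak local maximum at `u`:
if `x ∈ Ve` is farthest from `u`, the neighbours of `u` are at distance `d(u,x) ± 1` from `x`,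
and at most one of them (the next vertex on the unique `u`–`x` path) is closer. Hence once the
range increases along a path it keeps increasing, and it increases at the first step because the
Jordan center is the unique minimiser.
-/

namespace SimpleGraph

variable {V : Type*} {G : SimpleGraph V}

lemma IsTree.eq_of_adj_of_dist_add_one (hT : G.IsTree) {x u v w : V}
    (hv : G.Adj u v) (hw : G.Adj u w)
    (hvd : G.dist x v + 1 = G.dist x u) (hwd : G.dist x w + 1 = G.dist x u) : v = w := by
  obtain ⟨p, -, hpl⟩ := hT.connected.exists_path_of_dist x v
  obtain ⟨q, -, hql⟩ := hT.connected.exists_path_of_dist x w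
  have hp : (p.concat hv.symm).IsPath :=
    Walk.isPath_of_length_eq_dist _ (by rw [Walk.length_concat, hpl, hvd])
  have hq : (q.concat hw.symm).IsPath :=
    Walk.isPath_of_length_eq_dist _ (by rw [Walk.length_concat, hql, hwd])
  have hpq : p.concat hv.symm = q.concat hw.symm :=
    congrArg Subtype.val ((hT.isAcyclic.subsingleton_path x u).elim ⟨_, hp⟩ ⟨_, hq⟩)
  simpa using congrArg Walk.penultimate hpq

lemma IsTree.sup_dist_lt_or_sup_dist_lt (hT : G.IsTree) {A : Finset V} (hA : A.Nonempty)
    {u v w : V} (hv : G.Adj u v) (hw : G.Adj u w) (hvw : v ≠ w) :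
    A.sup (G.dist u) < A.sup (G.dist v) ∨ A.sup (G.dist u) < A.sup (G.dist w) := by
  obtain ⟨x, hx, hux⟩ := A.exists_mem_eq_sup hA (G.dist u)
  by_contra! h
  have closer {y : V} (hy : G.Adj u y) (hle : A.sup (G.dist y) ≤ A.sup (G.dist u)) :
      G.dist x y + 1 = G.dist x u := by
    have := (A.le_sup hx).trans hle
    rw [hux, dist_comm, dist_comm (u := u)] at this
    have := hT.dist_eq_dist_add_one_of_adj x hy
    omega
  exact hvw (hT.eq_of_adj_of_dist_add_one hv hw (closer hv h.1) (closer hw h.2))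

end SimpleGraph

theorem infection_range_strictly_increasing_from_unique_Jordan_center_general
    {V : Type*} (H : SimpleGraph V) (hT : H.IsTree)
    (Ve : Finset V) (hVe : Ve.Nonempty)
    (shat : V)
    (hJordan : ∀ w : V, Ve.sup (H.dist shat) ≤ Ve.sup (H.dist w))
    (huniq : ∀ w : V, Ve.sup (H.dist w) = Ve.sup (H.dist shat) → w = shat)
    (m : ℕ) (f : Fin (m + 1) → V)
    (hf0 : f 0 = shat)
    (hadj : ∀ i : Fin m, H.Adj (f i.castSucc) (f i.succ))
    (hinj : Function.Injective f) :
    ∀ i : Fin m, Ve.sup (H.dist (f i.castSucc)) < Ve.sup (H.dist (f i.succ)) := by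
  cases m with
  | zero => exact fun i ↦ i.elim0
  | succ k =>
    intro i
    induction i using Fin.induction with
    | zero =>
      rw [Fin.castSucc_zero, hf0]
      refine (hJordan _).lt_of_ne fun h ↦ ?_
      exact Fin.succ_ne_zero _ (hinj ((huniq _ h.symm).trans hf0.symm))
    | succ j ih =>
      have hback : f j.castSucc.castSucc ≠ f j.succ.succ :=
        hinj.ne (by simp [Fin.ext_iff]; omega)
      have hprev := hadj j.castSucc
      rw [Fin.succ_castSucc] at ih hprev
      exact (hT.sup_dist_lt_or_sup_dist_lt hVe hprev.symm (hadj j.succ) hback).resolve_left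
        ih.asymm

/-- Let `H` be a finite tree, `Ve` a nonempty subset of its vertices with `H`
the minimal connected subtree spanning `Ve` (equivalently, every leaf of `H` is in `Ve`), and
suppose `ŝ` is the unique Jordan center of `Ve` in `H`. Then along any simple path
`(ŝ, v₁, …, v_m)` in `H` with `m ≥ 1`, the infection ranges strictly increase:
`d̄(ŝ,Ve) < d̄(v₁,Ve) < … < d̄(v_m,Ve)`. -/
theorem infection_range_strictly_increasing_from_unique_Jordan_center
    {V : Type*} [Fintype V] (H : SimpleGraph V) (hT : H.IsTree)
    (Ve : Finset V) (hVe : Ve.Nonempty)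
    (hmin : ∀ w : V, (H.neighborSet w).ncard ≤ 1 → w ∈ Ve)
    (shat : V)
    (hJordan : ∀ w : V, Ve.sup (H.dist shat) ≤ Ve.sup (H.dist w))
    (huniq : ∀ w : V, Ve.sup (H.dist w) = Ve.sup (H.dist shat) → w = shat)
    (m : ℕ) (hm : 1 ≤ m) (f : Fin (m + 1) → V)
    (hf0 : f 0 = shat)
    (hadj : ∀ i : Fin m, H.Adj (f i.castSucc) (f i.succ))
    (hinj : Function.Injective f) :
    ∀ i : Fin m, Ve.sup (H.dist (f i.castSucc)) < Ve.sup (H.dist (f i.succ)) :=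
  infection_range_strictly_increasing_from_unique_Jordan_center_general H hT Ve hVe shat hJordan
    huniq m f hf0 hadj hinj
end
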